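/- arXiv:1403.1379 — 3 statements merged into one kernel-verified Lean document; each statement's English description precedes it below -/
import Mathlib

section
/- Let ρ : [0,∞) → [0,∞) be a nondecreasing concave function with ρ(0) = 0, and let r > 1. Then the function x ↦ ρ(x^{1/r})^r is also nondecreasing and concave on [0,∞). -/
open Set Real

lemma aux_deriv (p q r : ℝ) (hr : 1 < r) {x : ℝ} (hx : 0 < x) :
    HasDerivAt (fun z => (p * z ^ (1/r) + q) ^ r)
      (r * (p * x ^ (1/r) + q) ^ (r-1) * (p * (1/r * x ^ (1/r - 1)))) x := by
  have h1 : HasDerivAt (fun z : ℝ => z ^ (1/r)) (1/r * x ^ (1/r - 1)) x :=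
    Real.hasDerivAt_rpow_const (Or.inl hx.ne')
  have h2 : HasDerivAt (fun z : ℝ => p * z ^ (1/r) + q) (p * (1/r * x ^ (1/r - 1))) x :=
    (h1.const_mul p).add_const q
  have h3 : HasDerivAt (fun z : ℝ => z ^ r) (r * (p * x ^ (1/r) + q) ^ (r-1))
      (p * x ^ (1/r) + q) := Real.hasDerivAt_rpow_const (Or.inr hr.le)
  exact h3.comp x h2

lemma aux_deriv_eq (p q r : ℝ) (hp : 0 ≤ p) (hq : 0 ≤ q) (hr : 1 < r) {x : ℝ} (hx : 0 < x) :
    r * (p * x ^ (1/r) + q) ^ (r-1) * (p * (1/r * x ^ (1/r - 1)))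
      = p * (p + q * x ^ (-(1/r))) ^ (r-1) := by
  have hr0 : (0:ℝ) < r := lt_trans one_pos hr
  have hxr : (0:ℝ) ≤ x ^ (1/r) := Real.rpow_nonneg hx.le _
  have hxr' : (0:ℝ) ≤ x ^ (-(1/r)) := Real.rpow_nonneg hx.le _
  have e1 : x ^ (1/r - 1) = (x ^ (-(1/r))) ^ (r-1) := by
    rw [← Real.rpow_mul hx.le]
    congr 1
    field_simp
    ring
  have e2 : (p * x ^ (1/r) + q) ^ (r-1) * (x ^ (-(1/r))) ^ (r-1)
      = ((p * x ^ (1/r) + q) * x ^ (-(1/r))) ^ (r-1) :=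
    (Real.mul_rpow (by positivity) hxr').symm
  have e3 : (p * x ^ (1/r) + q) * x ^ (-(1/r)) = p + q * x ^ (-(1/r)) := by
    have : x ^ (1/r) * x ^ (-(1/r)) = 1 := by
      rw [← Real.rpow_add hx]; simp
    nlinarith [this]
  calc r * (p * x ^ (1/r) + q) ^ (r-1) * (p * (1/r * x ^ (1/r - 1)))
      = p * ((p * x ^ (1/r) + q) ^ (r-1) * x ^ (1/r - 1)) := by
        field_simp
    _ = p * ((p * x ^ (1/r) + q) ^ (r-1) * (x ^ (-(1/r))) ^ (r-1)) := by rw [e1]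
    _ = p * (p + q * x ^ (-(1/r))) ^ (r-1) := by rw [e2, e3]

lemma aux_concave (p q r : ℝ) (hp : 0 ≤ p) (hq : 0 ≤ q) (hr : 1 < r) :
    ConcaveOn ℝ (Set.Ici 0) (fun x => (p * x ^ (1/r) + q) ^ r) := by
  have hr0 : (0:ℝ) < r := lt_trans one_pos hr
  apply AntitoneOn.concaveOn_of_deriv (convex_Ici 0)
  · -- continuity
    apply ContinuousOn.rpow_const
    · exact ((continuousOn_id.rpow_const (fun x hx => Or.inr (by positivity))).const_smul p).add
        continuousOn_const
    · intro x hx; exact Or.inr hr0.le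
  · rw [interior_Ici]
    intro x hx
    exact (aux_deriv p q r hr hx).differentiableAt.differentiableWithinAt
  · rw [interior_Ici]
    intro x hx y hy hxy
    rw [(aux_deriv p q r hr hx).deriv, (aux_deriv p q r hr hy).deriv,
      aux_deriv_eq p q r hp hq hr hx, aux_deriv_eq p q r hp hq hr hy]
    have hinv : y ^ (-(1/r)) ≤ x ^ (-(1/r)) := by
      rw [Real.rpow_neg (le_of_lt hx), Real.rpow_neg (le_of_lt hy)]
      apply inv_anti₀ (Real.rpow_pos_of_pos hx _)
      exact Real.rpow_le_rpow hx.le hxy (by positivity)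
    have h1 : (0:ℝ) ≤ p + q * y ^ (-(1/r)) := by
      have := Real.rpow_nonneg (le_of_lt hy) (-(1/r)); positivity
    apply mul_le_mul_of_nonneg_left _ hp
    apply Real.rpow_le_rpow h1 (by nlinarith) (by linarith)

lemma helper (ρ : ℝ → ℝ) (hmono : MonotoneOn ρ (Set.Ici 0))
    (hconc : ConcaveOn ℝ (Set.Ici 0) ρ) (h0 : ρ 0 = 0)
    (hnonneg : ∀ x ∈ Set.Ici (0:ℝ), 0 ≤ ρ x)
    (r : ℝ) (hr : 1 < r) {x y a b : ℝ} (hx : x ∈ Set.Ici (0:ℝ)) (hy : y ∈ Set.Ici (0:ℝ))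
    (hxy : x < y) (ha : 0 ≤ a) (hb : 0 ≤ b) (hab : a + b = 1) :
    a * (ρ (x ^ (1/r))) ^ r + b * (ρ (y ^ (1/r))) ^ r
      ≤ (ρ ((a * x + b * y) ^ (1/r))) ^ r := by
  have hr0 : (0:ℝ) < r := lt_trans one_pos hr
  have hrr : (0:ℝ) < 1/r := by positivity
  have hx0 : (0:ℝ) ≤ x := hx
  have hy0 : (0:ℝ) < y := lt_of_le_of_lt hx0 hxy
  set A := x ^ (1/r) with hA
  set B := y ^ (1/r) with hB
  have hA0 : 0 ≤ A := Real.rpow_nonneg hx0 _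
  have hB0 : 0 < B := Real.rpow_pos_of_pos hy0 _
  have hAB : A < B := Real.rpow_lt_rpow hx0 hxy hrr
  set s := ρ A with hsdef
  set t := ρ B with htdef
  have hAmem : A ∈ Set.Ici (0:ℝ) := hA0
  have hBmem : B ∈ Set.Ici (0:ℝ) := hB0.le
  have hs0 : 0 ≤ s := hnonneg A hAmem
  have hst : s ≤ t := hmono hAmem hBmem hAB.le
  -- chord from 0 : (A/B) * t ≤ s
  have hchord0 : A * t ≤ B * s := by
    have h1 : (1 - A/B) • ρ 0 + (A/B) • ρ B ≤ ρ ((1 - A/B) • (0:ℝ) + (A/B) • B) :=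
      hconc.2 (le_refl (0:ℝ)) hBmem (by
          have : A/B ≤ 1 := by rw [div_le_one hB0]; exact hAB.le
          linarith) (by positivity) (by ring)
    have h2 : (1 - A/B) • (0:ℝ) + (A/B) • B = A := by
      simp [smul_eq_mul]
      field_simp
    rw [h2, h0] at h1
    simp only [smul_eq_mul, mul_zero, zero_add] at h1
    rw [div_mul_eq_mul_div, div_le_iff₀ hB0] at h1
    linarith
  set p := (t - s)/(B - A) with hpdef
  set q := s - p * A with hqdef
  have hBA : (0:ℝ) < B - A := by linarith
  have hp : 0 ≤ p := div_nonneg (by linarith) hBA.le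
  have hpBA : p * (B - A) = t - s := by
    rw [hpdef]; field_simp
  have hq : 0 ≤ q := by
    have hpA : p * A ≤ s := by
      rw [hpdef, div_mul_eq_mul_div, div_le_iff₀ hBA]
      nlinarith [hchord0]
    simpa [hqdef] using hpA
  have hLA : p * A + q = s := by rw [hqdef]; ring
  have hLB : p * B + q = t := by rw [hqdef]; linear_combination hpBA
  -- the combination point
  set c := a * x + b * y with hcdef
  have hxc : x ≤ c := by nlinarith [mul_nonneg hb (sub_nonneg.2 hxy.le)]
  have hcy : c ≤ y := by nlinarith [mul_nonneg ha (sub_nonneg.2 hxy.le)]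
  have hc0 : (0:ℝ) ≤ c := le_trans hx0 hxc
  set C := c ^ (1/r) with hC
  have hAC : A ≤ C := Real.rpow_le_rpow hx0 hxc hrr.le
  have hCB : C ≤ B := Real.rpow_le_rpow hc0 hcy hrr.le
  have hC0 : 0 ≤ C := le_trans hA0 hAC
  -- chord bound : p * C + q ≤ ρ C
  have hchord : p * C + q ≤ ρ C := by
    set μ := (B - C)/(B - A) with hμ
    have hμ0 : 0 ≤ μ := div_nonneg (by linarith) hBA.le
    have hμ1 : μ ≤ 1 := by rw [hμ, div_le_one hBA]; linarith
    have h1 : μ • ρ A + (1 - μ) • ρ B ≤ ρ (μ • A + (1 - μ) • B) :=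
      hconc.2 hAmem hBmem hμ0 (by linarith) (by ring)
    have hμBA : μ * (B - A) = B - C := by rw [hμ]; field_simp
    have h2 : μ • A + (1 - μ) • B = C := by
      simp only [smul_eq_mul]; linear_combination -hμBA
    rw [h2] at h1
    simp only [smul_eq_mul] at h1
    calc p * C + q = μ * s + (1 - μ) * t := by
          rw [← hLA, ← hLB]; linear_combination p * hμBA
      _ ≤ ρ C := h1
  -- conclude via aux_concave
  have hNconc := aux_concave p q r hp hq hr
  have hNc : a • (p * x ^ (1/r) + q) ^ r + b • (p * y ^ (1/r) + q) ^ r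
      ≤ (p * (a • x + b • y) ^ (1/r) + q) ^ r := hNconc.2 hx hy ha hb hab
  simp only [smul_eq_mul, ← hA, ← hB] at hNc
  rw [hLA, hLB] at hNc
  have hfinal : (p * C + q) ^ r ≤ (ρ C) ^ r :=
    Real.rpow_le_rpow (by positivity) hchord hr0.le
  calc a * s ^ r + b * t ^ r ≤ (p * C + q) ^ r := hNc
    _ ≤ (ρ C) ^ r := hfinal

/-- If `ρ : [0,∞) → [0,∞)` is nondecreasing and concave with `ρ 0 = 0` and `r > 1`,
then `x ↦ ρ(x^{1/r})^r` is nondecreasing and concave on `[0,∞)`. -/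
theorem rpow_comp_concave
    (ρ : ℝ → ℝ) (hmono : MonotoneOn ρ (Set.Ici 0))
    (hconc : ConcaveOn ℝ (Set.Ici 0) ρ) (h0 : ρ 0 = 0)
    (hnonneg : ∀ x ∈ Set.Ici (0:ℝ), 0 ≤ ρ x)
    (r : ℝ) (hr : 1 < r) :
    MonotoneOn (fun x => (ρ (x ^ (1/r))) ^ r) (Set.Ici 0) ∧
      ConcaveOn ℝ (Set.Ici 0) (fun x => (ρ (x ^ (1/r))) ^ r) := by
  have hr0 : (0:ℝ) < r := lt_trans one_pos hr
  have hrr : (0:ℝ) ≤ 1/r := by positivity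
  constructor
  · intro x hx y hy hxy
    have hx0 : (0:ℝ) ≤ x := hx
    have h1 : x ^ (1/r) ≤ y ^ (1/r) := Real.rpow_le_rpow hx0 hxy hrr
    have h2 : ρ (x ^ (1/r)) ≤ ρ (y ^ (1/r)) :=
      hmono (Real.rpow_nonneg hx0 _) (Real.rpow_nonneg (le_trans hx0 hxy) _) h1
    exact Real.rpow_le_rpow (hnonneg _ (Real.rpow_nonneg hx0 _)) h2 hr0.le
  · refine ⟨convex_Ici 0, ?_⟩
    intro x hx y hy a b ha hb hab
    simp only [smul_eq_mul]
    rcases lt_trichotomy x y with h | h | h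
    · exact helper ρ hmono hconc h0 hnonneg r hr hx hy h ha hb hab
    · subst h
      have hc : a * x + b * x = x := by linear_combination x * hab
      rw [hc]
      have : a * (ρ (x ^ (1/r))) ^ r + b * (ρ (x ^ (1/r))) ^ r = (ρ (x ^ (1/r))) ^ r := by
        linear_combination (ρ (x ^ (1/r))) ^ r * hab
      linarith
    · have := helper ρ hmono hconc h0 hnonneg r hr hy hx h hb ha (by linarith)
      have hc : b * y + a * x = a * x + b * y := by ring
      rw [hc] at this
      linarith
end

section
/- Let ρ : [0,∞) → [0,∞) be a nondecreasing concave function with ρ(0) = 0, ρ(u) > 0 for u > 0, and ∫_{0^+} du/ρ(u) = +∞ (i.e., for every ε > 0, ∫_0^ε du/ρ(u) = +∞). Then for every r ∈ (0,1), ∫_{0^+} du / ρ(u^{1/r})^r = +∞. -/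
open MeasureTheory

/-- 1D change of variables for the Lebesgue lower integral. -/
lemma my_lintegral_image_eq {s : Set ℝ} {f : ℝ → ℝ} {f' : ℝ → ℝ}
    (hs : MeasurableSet s) (hf' : ∀ x ∈ s, HasDerivWithinAt f (f' x) s x)
    (hf : Set.InjOn f s) (g : ℝ → ENNReal) :
    ∫⁻ x in f '' s, g x = ∫⁻ x in s, ENNReal.ofReal |f' x| * g (f x) := by
  simpa only [ContinuousLinearMap.det_toSpanSingleton] using
    lintegral_image_eq_lintegral_abs_det_fderiv_mul volume hs
      (fun x hx => (hf' x hx).hasFDerivWithinAt) hf g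

/-- If `ρ` is nondecreasing, concave with `ρ 0 = 0`, positive on `(0,∞)`, and
`∫_{0^+} du/ρ(u) = ∞`, then for `0 < r < 1`, `∫_{0^+} du/ρ(u^{1/r})^r = ∞`. -/
theorem divergence_change_of_exponent
    (ρ : ℝ → ℝ) (hmono : MonotoneOn ρ (Set.Ici 0))
    (hconc : ConcaveOn ℝ (Set.Ici 0) ρ) (h0 : ρ 0 = 0)
    (hpos : ∀ u > (0:ℝ), 0 < ρ u)
    (hdiv : ∀ ε > (0:ℝ), ∫⁻ u in Set.Ioo 0 ε, ENNReal.ofReal (1 / ρ u) = ⊤)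
    (r : ℝ) (hr0 : 0 < r) (hr1 : r < 1) :
    ∀ ε > (0:ℝ), ∫⁻ u in Set.Ioo 0 ε, ENNReal.ofReal (1 / (ρ (u ^ (1/r))) ^ r) = ⊤ := by
  intro ε hε
  set δ : ℝ := min ε 1 with hδdef
  have hδ0 : 0 < δ := lt_min hε one_pos
  have hδ1 : δ ≤ 1 := min_le_right _ _
  have hrne : r ≠ 0 := hr0.ne'
  -- it suffices to prove divergence on `Ioo 0 δ`
  suffices hmain : ∫⁻ u in Set.Ioo 0 δ, ENNReal.ofReal (1 / (ρ (u ^ (1/r))) ^ r) = ⊤ by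
    rw [eq_top_iff, ← hmain]
    exact lintegral_mono_set ((Set.Ioo_subset_Ioo (le_refl (0:ℝ)) (min_le_left ε 1)))
  -- change of variables `u = t ^ r`
  set η : ℝ := δ ^ (1/r) with hηdef
  have hη0 : 0 < η := Real.rpow_pos_of_pos hδ0 _
  have hηr : η ^ r = δ := by
    rw [hηdef, one_div, Real.rpow_inv_rpow hδ0.le hrne]
  have himg : (fun t : ℝ => t ^ r) '' Set.Ioo 0 η = Set.Ioo 0 δ := by
    ext u
    constructor
    · rintro ⟨t, ⟨ht0, htη⟩, rfl⟩
      exact ⟨Real.rpow_pos_of_pos ht0 _, hηr ▸ Real.rpow_lt_rpow ht0.le htη hr0⟩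
    · rintro ⟨hu0, huδ⟩
      refine ⟨u ^ (1/r), ⟨Real.rpow_pos_of_pos hu0 _, ?_⟩, ?_⟩
      · exact Real.rpow_lt_rpow hu0.le huδ (by positivity)
      · show (u ^ (1/r)) ^ r = u
        rw [one_div, Real.rpow_inv_rpow hu0.le hrne]
  have hderiv : ∀ t ∈ Set.Ioo (0:ℝ) η, HasDerivWithinAt (fun t : ℝ => t ^ r)
      (r * t ^ (r - 1)) (Set.Ioo 0 η) t := by
    intro t ht
    exact (Real.hasDerivAt_rpow_const (Or.inl ht.1.ne')).hasDerivWithinAt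
  have hinj : Set.InjOn (fun t : ℝ => t ^ r) (Set.Ioo 0 η) := by
    intro a ha b hb hab
    have hab' : a ^ r = b ^ r := hab
    have : (a ^ r) ^ (1/r) = (b ^ r) ^ (1/r) := by rw [hab']
    rwa [one_div, Real.rpow_rpow_inv ha.1.le hrne, Real.rpow_rpow_inv hb.1.le hrne] at this
  have hcov := my_lintegral_image_eq (measurableSet_Ioo)
    hderiv hinj (fun u => ENNReal.ofReal (1 / (ρ (u ^ (1/r))) ^ r))
  rw [himg] at hcov
  rw [hcov]
  -- the slope constant
  have hρη : 0 < ρ η := hpos η hη0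
  set c : ℝ := ρ η / η with hcdef
  have hc0 : 0 < c := div_pos hρη hη0
  -- pointwise lower bound on `Ioo 0 η`
  have key : ∀ t ∈ Set.Ioo (0:ℝ) η,
      ENNReal.ofReal (r * c ^ (1 - r)) * ENNReal.ofReal (1 / ρ t)
        ≤ ENNReal.ofReal |r * t ^ (r - 1)| *
            ENNReal.ofReal (1 / (ρ ((t ^ r) ^ (1/r))) ^ r) := by
    intro t ht
    obtain ⟨ht0, htη⟩ := ht
    have hρt : 0 < ρ t := hpos t ht0
    have htrr : ((t ^ r : ℝ)) ^ (1/r) = t := by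
      rw [one_div, Real.rpow_rpow_inv ht0.le hrne]
    rw [htrr]
    have htr1 : (0:ℝ) < t ^ (r - 1) := Real.rpow_pos_of_pos ht0 _
    have hρtr : (0:ℝ) < ρ t ^ r := Real.rpow_pos_of_pos hρt _
    rw [abs_of_pos (by positivity), ← ENNReal.ofReal_mul (by positivity),
      ← ENNReal.ofReal_mul (by positivity)]
    apply ENNReal.ofReal_le_ofReal
    -- the key real inequality
    have hlin : c * t ≤ ρ t := by
      have ha : (0:ℝ) ≤ t/η := (div_pos ht0 hη0).le
      have hb : (0:ℝ) ≤ 1 - t/η := by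
        have : t / η ≤ 1 := (div_le_one hη0).2 htη.le
        linarith
      have hab : t/η + (1 - t/η) = 1 := by ring
      have hcc := hconc.2 (Set.mem_Ici.2 hη0.le) (Set.mem_Ici.2 (le_refl (0:ℝ)))
        ha hb hab
      have h1 : (t/η) • η + (1 - t/η) • (0:ℝ) = t := by
        simp [smul_eq_mul]
        field_simp
      rw [h1, h0] at hcc
      simp only [smul_eq_mul] at hcc
      have : (t/η) * ρ η + (1 - t/η) * 0 = c * t := by
        rw [hcdef]; field_simp; ring
      linarith [hcc]
    have hpowle : c ^ (1-r) * t ^ (1-r) ≤ ρ t ^ (1-r) := by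
      rw [← Real.mul_rpow hc0.le ht0.le]
      exact Real.rpow_le_rpow (by positivity) hlin (by linarith)
    have hsum : ρ t ^ (1-r) * ρ t ^ r = ρ t := by
      rw [← Real.rpow_add hρt, show (1-r+r:ℝ) = 1 by ring, Real.rpow_one]
    have h1' : (1:ℝ) / ρ t ^ r = ρ t ^ (1-r) * (1/ρ t) := by
      rw [mul_one_div, div_eq_div_iff hρtr.ne' hρt.ne', one_mul]
      exact hsum.symm
    have h1 : t ^ (r-1) * (1 / ρ t ^ r) = (t ^ (r-1) * ρ t ^ (1-r)) * (1/ρ t) := by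
      rw [h1', mul_assoc]
    have h2 : c ^ (1-r) ≤ t ^ (r-1) * ρ t ^ (1-r) := by
      have heq : t ^ (r-1) * (c ^ (1-r) * t ^ (1-r)) = c ^ (1-r) := by
        rw [mul_left_comm, ← Real.rpow_add ht0, show (r-1+(1-r):ℝ) = 0 by ring,
          Real.rpow_zero, mul_one]
      calc c ^ (1-r) = t ^ (r-1) * (c ^ (1-r) * t ^ (1-r)) := heq.symm
        _ ≤ t ^ (r-1) * ρ t ^ (1-r) :=
            mul_le_mul_of_nonneg_left hpowle htr1.le
    calc r * c ^ (1-r) * (1/ρ t)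
        ≤ r * (t ^ (r-1) * ρ t ^ (1-r)) * (1/ρ t) := by
          apply mul_le_mul_of_nonneg_right _ (by positivity)
          exact mul_le_mul_of_nonneg_left h2 hr0.le
      _ = r * t ^ (r-1) * (1 / ρ t ^ r) := by
          rw [mul_assoc, ← h1, mul_assoc]
  -- conclude
  have hconst : ENNReal.ofReal (r * c ^ (1-r)) ≠ 0 :=
    (ENNReal.ofReal_pos.2 (by positivity)).ne'
  rw [eq_top_iff]
  calc (⊤ : ENNReal)
      = ENNReal.ofReal (r * c ^ (1-r)) * ∫⁻ t in Set.Ioo 0 η, ENNReal.ofReal (1/ρ t) := by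
        rw [hdiv η hη0, ENNReal.mul_top hconst]
    _ = ∫⁻ t in Set.Ioo 0 η, ENNReal.ofReal (r * c ^ (1-r)) * ENNReal.ofReal (1/ρ t) :=
        (lintegral_const_mul' _ _ ENNReal.ofReal_ne_top).symm
    _ ≤ _ := setLIntegral_mono' measurableSet_Ioo key
end

section
/- Fix p > 1 and δ ∈ (0, e^{-1}) small enough. Define h : [0,∞) → [0,∞) by h(x) = x·|ln x|^{1/p} for 0 < x ≤ δ, h(0) = 0, and h(x) = h'(δ−)(x − δ) + h(δ) for x > δ. Then the function κ̄(u) := h(u^{1/p})^p is concave and nondecreasing on [0,∞) with κ̄(0) = 0, κ̄(u) > 0 for u > 0, and ∫_{0^+} du/κ̄(u) = +∞. -/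
open MeasureTheory

open Set Real



section Aux

/-- derivative of the left model piece -/
lemma ex46_hasDerivAt_phi1 {p u : ℝ} (hp0 : p ≠ 0) (hu : 0 < u) :
    HasDerivAt (fun u : ℝ => u * (-Real.log u) / p) ((-Real.log u - 1) / p) u := by
  have h := (Real.hasDerivAt_log hu.ne').neg
  have h2 : HasDerivAt (fun u : ℝ => u * (-Real.log u))
      (1 * (-Real.log u) + u * -u⁻¹) u := (hasDerivAt_id u).mul h
  have h3 := h2.div_const p
  convert h3 using 1
  rfl
  rfl
  linear_combination (1/p) * mul_inv_cancel₀ hu.ne'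

/-- derivative of the right model piece -/
lemma ex46_hasDerivAt_phi2 {p a b u : ℝ} (hp : 1 < p) (ha : 0 < a) (hb : 0 < b) (hu : 0 < u) :
    HasDerivAt (fun u : ℝ => (a * u ^ (1/p) + b) ^ p)
      (a * (a + b * u ^ (-(1/p))) ^ (p-1)) u := by
  have hp0 : p ≠ 0 := by linarith
  have hs : 0 < u ^ (1/p) := Real.rpow_pos_of_pos hu _
  have hz : 0 < a * u ^ (1/p) + b := by positivity
  have hrpow := Real.hasDerivAt_rpow_const (x := u) (p := 1/p) (Or.inl hu.ne')
  have hinner : HasDerivAt (fun u : ℝ => a * u ^ (1/p) + b)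
      (a * (1/p * u ^ (1/p - 1))) u := by
    simpa using (hrpow.const_mul a).add_const b
  have houter := hinner.rpow_const (p := p) (Or.inl hz.ne')
  convert houter using 1
  have h1 : u ^ (1/p - 1) = (u ^ (1/p)) ^ (-(p-1)) := by
    rw [← Real.rpow_mul hu.le]
    congr 1
    field_simp
    ring
  have key : (a * u ^ (1/p) + b) ^ (p-1) * u ^ (1/p - 1)
      = (a + b * u ^ (-(1/p))) ^ (p-1) := by
    rw [h1, Real.rpow_neg hs.le, ← div_eq_mul_inv, ← Real.div_rpow hz.le hs.le]
    congr 1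
    rw [Real.rpow_neg hu.le]
    field_simp
  rw [← key]
  field_simp

end Aux


section KAux

variable {p a b t : ℝ}

/-- the explicit piecewise form of κ̄ -/
noncomputable def ex46K (p a b t : ℝ) : ℝ → ℝ := fun u =>
  if u ≤ t then u * (-Real.log u) / p else (a * u ^ (1/p) + b) ^ p

/-- the derivative of `ex46K` -/
noncomputable def ex46D (p a b t : ℝ) : ℝ → ℝ := fun u =>
  if u ≤ t then (-Real.log u - 1) / p else a * (a + b * u ^ (-(1/p))) ^ (p-1)

lemma ex46_K_hasDerivAt (hp : 1 < p) (ha : 0 < a) (hb : 0 < b) (ht0 : 0 < t)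
    (hJ : a * (a + b * t ^ (-(1/p))) ^ (p-1) = (-Real.log t - 1) / p)
    (hKj : t * (-Real.log t) / p = (a * t ^ (1/p) + b) ^ p) :
    ∀ u ∈ Ioi (0:ℝ), HasDerivAt (ex46K p a b t) (ex46D p a b t u) u := by
  have hp0 : p ≠ 0 := by linarith
  intro u hu
  rcases lt_trichotomy u t with hlt | heq | hgt
  · -- left piece
    have hD : ex46D p a b t u = (-Real.log u - 1) / p := if_pos hlt.le
    rw [hD]
    refine (ex46_hasDerivAt_phi1 hp0 hu).congr_of_eventuallyEq ?_
    filter_upwards [Iio_mem_nhds hlt] with x hx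
    exact if_pos (le_of_lt hx)
  · -- junction
    subst heq
    have hD : ex46D p a b u u = (-Real.log u - 1) / p := if_pos le_rfl
    rw [hD]
    have hleft : HasDerivWithinAt (ex46K p a b u) ((-Real.log u - 1) / p) (Iic u) u := by
      refine ((ex46_hasDerivAt_phi1 hp0 hu).hasDerivWithinAt).congr ?_ ?_
      · intro x hx
        exact if_pos hx
      · exact if_pos le_rfl
    have hright : HasDerivWithinAt (ex46K p a b u) ((-Real.log u - 1) / p) (Ici u) u := by
      have h2 := (ex46_hasDerivAt_phi2 hp ha hb hu).hasDerivWithinAt (s := Ici u)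
      rw [hJ] at h2
      refine h2.congr ?_ ?_
      · intro x hx
        rcases eq_or_lt_of_le (mem_Ici.mp hx) with hxe | hxlt
        · rw [← hxe]
          simpa [ex46K, if_pos le_rfl] using hKj
        · exact if_neg (not_le.mpr hxlt)
      · simpa [ex46K, if_pos le_rfl] using hKj
    have hu2 := hleft.union hright
    rw [Iic_union_Ici] at hu2
    exact hasDerivWithinAt_univ.mp hu2
  · -- right piece
    have hD : ex46D p a b t u = a * (a + b * u ^ (-(1/p))) ^ (p-1) := if_neg (not_le.mpr hgt)
    rw [hD]
    refine (ex46_hasDerivAt_phi2 hp ha hb hu).congr_of_eventuallyEq ?_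
    filter_upwards [Ioi_mem_nhds hgt] with x hx
    exact if_neg (not_le.mpr hx)

lemma ex46_D_antitone (hp : 1 < p) (ha : 0 < a) (hb : 0 < b) (ht0 : 0 < t)
    (hJ : a * (a + b * t ^ (-(1/p))) ^ (p-1) = (-Real.log t - 1) / p) :
    AntitoneOn (ex46D p a b t) (Ioi (0:ℝ)) := by
  have hp0 : (0:ℝ) < p := by linarith
  have hR : ∀ x ∈ Ioi (0:ℝ), ∀ y ∈ Ioi (0:ℝ), x ≤ y →
      a * (a + b * y ^ (-(1/p))) ^ (p-1) ≤ a * (a + b * x ^ (-(1/p))) ^ (p-1) := by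
    intro x hx y hy hxy
    have h1 : y ^ (-(1/p)) ≤ x ^ (-(1/p)) := by
      rw [Real.rpow_neg (le_of_lt hx), Real.rpow_neg (le_of_lt hy)]
      have hx1 : (0:ℝ) < x ^ (1/p) := Real.rpow_pos_of_pos hx _
      exact inv_anti₀ hx1 (Real.rpow_le_rpow (le_of_lt hx) hxy (by positivity))
    have h2 : (0:ℝ) ≤ a + b * y ^ (-(1/p)) := by
      have : (0:ℝ) ≤ y ^ (-(1/p)) := Real.rpow_nonneg (le_of_lt hy) _
      positivity
    have h3 : (a + b * y ^ (-(1/p))) ^ (p-1) ≤ (a + b * x ^ (-(1/p))) ^ (p-1) := by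
      apply Real.rpow_le_rpow h2 _ (by linarith)
      nlinarith [hb]
    nlinarith [ha]
  have hL : ∀ x y : ℝ, 0 < x → x ≤ y →
      (-Real.log y - 1) / p ≤ (-Real.log x - 1) / p := by
    intro x y hx hxy
    have h := Real.log_le_log hx hxy
    exact (div_le_div_iff_of_pos_right hp0).mpr (by linarith)
  intro x hx y hy hxy
  by_cases hyt : y ≤ t
  · have hxt : x ≤ t := le_trans hxy hyt
    simp only [ex46D]
    rw [if_pos hxt, if_pos hyt]
    exact hL x y hx hxy
  · by_cases hxt : x ≤ t
    · simp only [ex46D]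
      rw [if_pos hxt, if_neg hyt]
      calc a * (a + b * y ^ (-(1/p))) ^ (p-1)
          ≤ a * (a + b * t ^ (-(1/p))) ^ (p-1) := hR t ht0 y hy (le_of_not_ge hyt)
        _ = (-Real.log t - 1) / p := hJ
        _ ≤ (-Real.log x - 1) / p := hL x t hx hxt
    · simp only [ex46D]
      rw [if_neg hxt, if_neg hyt]
      exact hR x hx y hy hxy

lemma ex46_D_nonneg (hp : 1 < p) (ha : 0 < a) (hb : 0 < b)
    (ht1 : t ≤ Real.exp (-1)) :
    ∀ u ∈ Ioi (0:ℝ), 0 ≤ ex46D p a b t u := by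
  intro u hu
  simp only [ex46D]
  split_ifs with h
  · have h1 : Real.log u ≤ -1 := by
      calc Real.log u ≤ Real.log (Real.exp (-1)) :=
        Real.log_le_log hu (le_trans h ht1)
      _ = -1 := Real.log_exp _
    have hpp : (0:ℝ) < p := by linarith
    have h2 : (0:ℝ) ≤ -Real.log u - 1 := by linarith
    positivity
  · have h1 : (0:ℝ) ≤ u ^ (-(1/p)) := Real.rpow_nonneg (le_of_lt hu) _
    have h2 : (0:ℝ) ≤ (a + b * u ^ (-(1/p))) ^ (p-1) := Real.rpow_nonneg (by positivity) _
    positivity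

lemma ex46_K_continuousOn (hp : 1 < p) (ha : 0 < a) (hb : 0 < b) (ht0 : 0 < t)
    (hJ : a * (a + b * t ^ (-(1/p))) ^ (p-1) = (-Real.log t - 1) / p)
    (hKj : t * (-Real.log t) / p = (a * t ^ (1/p) + b) ^ p) :
    ContinuousOn (ex46K p a b t) (Ici 0) := by
  intro x hx
  rcases eq_or_lt_of_le (α := ℝ) hx with hx0 | hx0
  · -- continuity at 0
    rw [← hx0]
    rw [← Set.Ioi_insert]
    apply continuousWithinAt_insert_self.mpr
    have hK0 : ex46K p a b t 0 = 0 := by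
      rw [ex46K]
      simp [ht0.le]
    rw [ContinuousWithinAt, hK0]
    have htends : Filter.Tendsto (fun u : ℝ => -(Real.log u * u ^ (1:ℝ)) / p)
        (nhdsWithin 0 (Ioi 0)) (nhds 0) := by
      have := (tendsto_log_mul_rpow_nhdsGT_zero one_pos).neg.div_const p
      simpa using this
    refine htends.congr' ?_
    filter_upwards [Ioo_mem_nhdsGT_of_mem ⟨le_rfl, ht0⟩] with u hu
    simp only [ex46K]
    rw [if_pos hu.2.le, Real.rpow_one]
    ring
  · exact (ex46_K_hasDerivAt hp ha hb ht0 hJ hKj x hx0).continuousAt.continuousWithinAt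

end KAux


section KAux2

variable {p a b t : ℝ}

lemma ex46_K_concave (hp : 1 < p) (ha : 0 < a) (hb : 0 < b) (ht0 : 0 < t)
    (hJ : a * (a + b * t ^ (-(1/p))) ^ (p-1) = (-Real.log t - 1) / p)
    (hKj : t * (-Real.log t) / p = (a * t ^ (1/p) + b) ^ p) :
    ConcaveOn ℝ (Ici 0) (ex46K p a b t) := by
  have hDK := ex46_K_hasDerivAt hp ha hb ht0 hJ hKj
  refine AntitoneOn.concaveOn_of_deriv (convex_Ici 0)
    (ex46_K_continuousOn hp ha hb ht0 hJ hKj) ?_ ?_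
  · rw [interior_Ici]
    exact fun x hx => (hDK x hx).differentiableAt.differentiableWithinAt
  · rw [interior_Ici]
    intro x hx y hy hxy
    rw [(hDK x hx).deriv, (hDK y hy).deriv]
    exact ex46_D_antitone hp ha hb ht0 hJ hx hy hxy

lemma ex46_K_monotone (hp : 1 < p) (ha : 0 < a) (hb : 0 < b) (ht0 : 0 < t)
    (ht1 : t ≤ Real.exp (-1))
    (hJ : a * (a + b * t ^ (-(1/p))) ^ (p-1) = (-Real.log t - 1) / p)
    (hKj : t * (-Real.log t) / p = (a * t ^ (1/p) + b) ^ p) :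
    MonotoneOn (ex46K p a b t) (Ici 0) := by
  have hDK := ex46_K_hasDerivAt hp ha hb ht0 hJ hKj
  refine monotoneOn_of_deriv_nonneg (convex_Ici 0)
    (ex46_K_continuousOn hp ha hb ht0 hJ hKj) ?_ ?_
  · rw [interior_Ici]
    exact fun x hx => (hDK x hx).differentiableAt.differentiableWithinAt
  · rw [interior_Ici]
    intro x hx
    rw [(hDK x hx).deriv]
    exact ex46_D_nonneg hp ha hb ht1 x hx

lemma ex46_K_pos (hp : 1 < p) (ha : 0 < a) (hb : 0 < b)
    (ht1 : t ≤ Real.exp (-1)) :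
    ∀ u : ℝ, 0 < u → 0 < ex46K p a b t u := by
  intro u hu
  have hp0 : (0:ℝ) < p := by linarith
  simp only [ex46K]
  split_ifs with h
  · have h1 : Real.log u ≤ -1 := by
      calc Real.log u ≤ Real.log (Real.exp (-1)) := Real.log_le_log hu (le_trans h ht1)
        _ = -1 := Real.log_exp _
    have h2 : (0:ℝ) < -Real.log u := by linarith
    positivity
  · have h1 : (0:ℝ) < u ^ (1/p) := Real.rpow_pos_of_pos hu _
    have h2 : (0:ℝ) < a * u ^ (1/p) + b := by positivity
    exact Real.rpow_pos_of_pos h2 _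

end KAux2

section Alg

variable {p δ : ℝ}

lemma ex46_L_ge (hδ : 0 < δ) (hδ2 : δ ≤ Real.exp (-2)) : 2 ≤ -Real.log δ := by
  have h := Real.log_le_log hδ hδ2
  rw [Real.log_exp] at h
  linarith

lemma ex46_Lsplit (hp : 1 < p) {L : ℝ} (hL0 : 0 < L) :
    L ^ (1/p) = L ^ (1/p - 1) * L := by
  have h := Real.rpow_add_one hL0.ne' (1/p - 1)
  rw [show (1/p - 1 + 1 : ℝ) = 1/p by ring] at h
  exact h

lemma ex46_A_pos (hp : 1 < p) (hδ : 0 < δ) (hδ2 : δ ≤ Real.exp (-2)) :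
    0 < (-Real.log δ) ^ (1/p) - 1/p * (-Real.log δ) ^ (1/p - 1) := by
  have hL2 := ex46_L_ge hδ hδ2
  have hL0 : (0:ℝ) < -Real.log δ := by linarith
  have hpos := Real.rpow_pos_of_pos hL0 (1/p - 1)
  have hp1 : 1/p < 1 := by rw [div_lt_one (by linarith)]; linarith
  rw [ex46_Lsplit hp hL0]
  nlinarith

lemma ex46_hJ (hp : 1 < p) (hδ : 0 < δ) (hδ2 : δ ≤ Real.exp (-2)) :
    ((-Real.log δ) ^ (1/p) - 1/p * (-Real.log δ) ^ (1/p - 1)) *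
      (((-Real.log δ) ^ (1/p) - 1/p * (-Real.log δ) ^ (1/p - 1))
        + (δ/p * (-Real.log δ) ^ (1/p - 1)) * (δ ^ p) ^ (-(1/p))) ^ (p-1)
      = (-Real.log (δ ^ p) - 1) / p := by
  have hL2 := ex46_L_ge hδ hδ2
  have hL0 : (0:ℝ) < -Real.log δ := by linarith
  have hp0 : (0:ℝ) < p := by linarith
  set L := -Real.log δ with hLdef
  -- (δ^p)^(-(1/p)) = δ⁻¹
  have h1 : (δ ^ p) ^ (-(1/p)) = δ⁻¹ := by
    rw [← Real.rpow_mul hδ.le]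
    have : p * -(1/p) = -1 := by field_simp
    rw [this, Real.rpow_neg_one]
  rw [h1]
  -- the base simplifies to L ^ (1/p)
  have h2 : (L ^ (1/p) - 1/p * L ^ (1/p - 1)) + (δ/p * L ^ (1/p - 1)) * δ⁻¹
      = L ^ (1/p) := by
    field_simp
    ring
  rw [h2]
  -- (L^(1/p))^(p-1) = L^((p-1)/p)
  have h3 : (L ^ (1/p)) ^ (p-1) = L ^ (1/p * (p-1)) := by
    rw [← Real.rpow_mul hL0.le]
  rw [h3]
  have h4 : L ^ (1/p - 1) * L ^ (1/p * (p-1)) = 1 := by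
    rw [← Real.rpow_add hL0]
    have h0 : 1/p - 1 + 1/p * (p-1) = 0 := by field_simp; ring
    rw [h0, Real.rpow_zero]
  have h5 : Real.log (δ ^ p) = p * Real.log δ := Real.log_rpow hδ p
  have h6 : -(p * Real.log δ) = p * L := by rw [hLdef]; ring
  rw [ex46_Lsplit hp hL0, h5, h6]
  rw [show (L ^ (1/p - 1) * L - 1/p * L ^ (1/p - 1)) * L ^ (1/p * (p-1))
      = (L - 1/p) * (L ^ (1/p - 1) * L ^ (1/p * (p-1))) from by ring, h4, mul_one]
  field_simp

lemma ex46_hKj (hp : 1 < p) (hδ : 0 < δ) (hδ2 : δ ≤ Real.exp (-2)) :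
    δ ^ p * (-Real.log (δ ^ p)) / p
      = (((-Real.log δ) ^ (1/p) - 1/p * (-Real.log δ) ^ (1/p - 1)) * (δ ^ p) ^ (1/p)
          + δ/p * (-Real.log δ) ^ (1/p - 1)) ^ p := by
  have hL2 := ex46_L_ge hδ hδ2
  have hL0 : (0:ℝ) < -Real.log δ := by linarith
  have hp0 : (0:ℝ) < p := by linarith
  set L := -Real.log δ with hLdef
  have h1 : (δ ^ p) ^ (1/p) = δ := by
    rw [← Real.rpow_mul hδ.le]
    have : p * (1/p) = 1 := by field_simp
    rw [this, Real.rpow_one]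
  rw [h1]
  have h2 : (L ^ (1/p) - 1/p * L ^ (1/p - 1)) * δ + δ/p * L ^ (1/p - 1)
      = δ * L ^ (1/p) := by field_simp; ring
  rw [h2]
  have h3 : (δ * L ^ (1/p)) ^ p = δ ^ p * (L ^ (1/p)) ^ p :=
    Real.mul_rpow hδ.le (Real.rpow_nonneg hL0.le _)
  have h4 : (L ^ (1/p)) ^ p = L := by
    rw [← Real.rpow_mul hL0.le]
    have : 1/p * p = 1 := by field_simp
    rw [this, Real.rpow_one]
  have h5 : Real.log (δ ^ p) = p * Real.log δ := Real.log_rpow hδ p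
  rw [h3, h4, h5]
  have h6 : -(p * Real.log δ) = p * L := by rw [hLdef]; ring
  rw [h6]
  field_simp

lemma ex46_slope (hp : 1 < p) (hδ : 0 < δ) (hδ1 : δ < 1) :
    derivWithin (fun x => x * |Real.log x| ^ (1/p)) (Iio δ) δ
      = (-Real.log δ) ^ (1/p) - 1/p * (-Real.log δ) ^ (1/p - 1) := by
  have hp0 : (0:ℝ) < p := by linarith
  have hL0 : (0:ℝ) < -Real.log δ := by
    have := Real.log_neg hδ hδ1
    linarith
  have hlog := ((Real.hasDerivAt_log hδ.ne').neg).rpow_const (p := 1/p) (Or.inl hL0.ne')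
  have hg := (hasDerivAt_id δ).mul hlog
  have hg' : HasDerivAt (fun x : ℝ => x * (-Real.log x) ^ (1/p))
      ((-Real.log δ) ^ (1/p) - 1/p * (-Real.log δ) ^ (1/p - 1)) δ := by
    convert hg using 1
    rfl
    rfl
    rfl
    simp only [Pi.neg_apply, id_eq]
    linear_combination (1/p * (-Real.log δ) ^ (1/p - 1)) * mul_inv_cancel₀ hδ.ne'
  have hf : HasDerivAt (fun x => x * |Real.log x| ^ (1/p))
      ((-Real.log δ) ^ (1/p) - 1/p * (-Real.log δ) ^ (1/p - 1)) δ := by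
    refine hg'.congr_of_eventuallyEq ?_
    filter_upwards [isOpen_Ioo.mem_nhds (show δ ∈ Ioo (0:ℝ) 1 from ⟨hδ, hδ1⟩)] with x hx
    rw [abs_of_neg (Real.log_neg hx.1 hx.2)]
  exact hf.hasDerivWithinAt.derivWithin (uniqueDiffWithinAt_Iio δ)

end Alg


lemma ex46_lintegral_piece {p c : ℝ} (hp : 1 < p) (hc0 : 0 < c)
    (hc1 : c ≤ Real.exp (-1)) (M : ℝ) :
    ∃ a : ℝ, 0 < a ∧ a < c ∧
      ENNReal.ofReal M ≤ ∫⁻ x in Ioc a c, ENNReal.ofReal (p / (x * (-Real.log x))) := by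
  have hp0 : (0:ℝ) < p := by linarith
  have hlogc : Real.log c ≤ -1 := by
    calc Real.log c ≤ Real.log (Real.exp (-1)) := Real.log_le_log hc0 hc1
      _ = -1 := Real.log_exp _
  have hnlc : (0:ℝ) < -Real.log c := by linarith
  set T : ℝ := max (M/p + Real.log (-Real.log c)) (Real.log (-Real.log c) + 1) with hT
  set a : ℝ := Real.exp (-Real.exp T) with haDef
  have ha0 : 0 < a := Real.exp_pos _
  have hloga : Real.log a = -Real.exp T := Real.log_exp _
  have hlognega : Real.log (-Real.log a) = T := by
    rw [hloga, neg_neg, Real.log_exp]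
  have hac : a < c := by
    have h1 : Real.log (-Real.log c) + 1 ≤ T := le_max_right _ _
    have h2 : -Real.log c < Real.exp T := by
      calc -Real.log c = Real.exp (Real.log (-Real.log c)) := (Real.exp_log hnlc).symm
        _ < Real.exp T := Real.exp_lt_exp.mpr (by linarith)
    calc a = Real.exp (-Real.exp T) := rfl
      _ < Real.exp (Real.log c) := Real.exp_lt_exp.mpr (by linarith)
      _ = c := Real.exp_log hc0
  -- facts about points of [a, c]
  have hfacts : ∀ x ∈ Icc a c, 0 < x ∧ 0 < -Real.log x := by
    intro x hx
    have hx0 : 0 < x := lt_of_lt_of_le ha0 hx.1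
    have : Real.log x ≤ -1 := by
      calc Real.log x ≤ Real.log c := Real.log_le_log hx0 hx.2
        _ ≤ -1 := hlogc
    exact ⟨hx0, by linarith⟩
  -- FTC
  have hderiv : ∀ x ∈ Icc a c,
      HasDerivAt (fun x => -p * Real.log (-Real.log x)) (p / (x * (-Real.log x))) x := by
    intro x hx
    obtain ⟨hx0, hnl⟩ := hfacts x hx
    have h1 : HasDerivAt (fun x : ℝ => -Real.log x) (-x⁻¹) x :=
      (Real.hasDerivAt_log hx0.ne').neg
    have h2 := (Real.hasDerivAt_log hnl.ne').comp x h1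
    have h3 := h2.const_mul (-p)
    convert h3 using 1
    rfl
    rfl
    rfl
    rw [div_eq_mul_inv, mul_inv]
    ring
  have hcont : ContinuousOn (fun x => p / (x * (-Real.log x))) (Icc a c) := by
    apply ContinuousOn.div continuousOn_const
    · exact continuousOn_id.mul ((Real.continuousOn_log.mono
        (fun x hx => (hfacts x hx).1.ne')).neg)
    · intro x hx
      obtain ⟨hx0, hnl⟩ := hfacts x hx
      positivity
  have hint : IntervalIntegrable (fun x => p / (x * (-Real.log x))) volume a c := by
    apply ContinuousOn.intervalIntegrable
    rwa [uIcc_of_le hac.le]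
  have hFTC := intervalIntegral.integral_eq_sub_of_hasDerivAt
    (f := fun x => -p * Real.log (-Real.log x)) (by rwa [uIcc_of_le hac.le]) hint
  have hval : M ≤ ∫ x in a..c, p / (x * (-Real.log x)) := by
    rw [hFTC]
    rw [hlognega]
    have h1 : M/p + Real.log (-Real.log c) ≤ T := le_max_left _ _
    have h2 : M ≤ p * (T - Real.log (-Real.log c)) := by
      have := mul_le_mul_of_nonneg_left h1 hp0.le
      calc M = p * (M/p) := by field_simp
        _ ≤ p * (T - Real.log (-Real.log c)) := by nlinarith
    nlinarith
  have hInt : IntegrableOn (fun x => p / (x * (-Real.log x))) (Ioc a c) :=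
    (hcont.integrableOn_compact isCompact_Icc).mono_set Ioc_subset_Icc_self
  have hnn : 0 ≤ᵐ[volume.restrict (Ioc a c)] fun x => p / (x * (-Real.log x)) := by
    rw [Filter.EventuallyLE, ae_restrict_iff' measurableSet_Ioc]
    apply Filter.Eventually.of_forall
    intro x hx
    obtain ⟨hx0, hnl⟩ := hfacts x (Ioc_subset_Icc_self hx)
    positivity
  have heq := MeasureTheory.ofReal_integral_eq_lintegral_ofReal hInt hnn
  refine ⟨a, ha0, hac, ?_⟩
  rw [← heq]
  apply ENNReal.ofReal_le_ofReal
  rwa [← intervalIntegral.integral_of_le hac.le]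



/-- Example 4.6: for `δ ∈ (0, e^{-1})` small enough, with
`h(x) = x|ln x|^{1/p}` on `(0,δ]`, `h(0)=0`, linearly extended beyond `δ` with
slope the left derivative at `δ`, the function `κ̄(u) = h(u^{1/p})^p` is concave,
nondecreasing, vanishes at `0`, is positive on `(0,∞)`, and `∫_{0^+} du/κ̄(u) = ∞`. -/
theorem example_4_6 (p : ℝ) (hp : 1 < p) :
    ∃ δ₀ : ℝ, 0 < δ₀ ∧ δ₀ < Real.exp (-1) ∧
      ∀ δ : ℝ, 0 < δ → δ ≤ δ₀ →
        let slope : ℝ := derivWithin (fun x => x * |Real.log x| ^ (1/p)) (Set.Iio δ) δ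
        let h : ℝ → ℝ := fun x =>
          if x ≤ 0 then 0
          else if x ≤ δ then x * |Real.log x| ^ (1/p)
          else slope * (x - δ) + δ * |Real.log δ| ^ (1/p)
        let κbar : ℝ → ℝ := fun u => (h (u ^ (1/p))) ^ p
        ConcaveOn ℝ (Set.Ici 0) κbar ∧ MonotoneOn κbar (Set.Ici 0) ∧
          κbar 0 = 0 ∧ (∀ u > (0:ℝ), 0 < κbar u) ∧
          ∀ ε > (0:ℝ), ∫⁻ u in Set.Ioo 0 ε, ENNReal.ofReal (1 / κbar u) = ⊤ := by
  refine ⟨Real.exp (-2), Real.exp_pos _, Real.exp_lt_exp.mpr (by norm_num), ?_⟩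
  intro δ hδ hδ2
  intro slope h κbar
  have hp0 : (0:ℝ) < p := by linarith
  have hexp1 : Real.exp (-2) < 1 := by
    have := Real.exp_lt_exp.mpr (show (-2:ℝ) < 0 by norm_num)
    rwa [Real.exp_zero] at this
  have hδ1 : δ < 1 := lt_of_le_of_lt hδ2 hexp1
  have hL2 : 2 ≤ -Real.log δ := ex46_L_ge hδ hδ2
  have hL0 : (0:ℝ) < -Real.log δ := by linarith
  have hApos : 0 < (-Real.log δ) ^ (1/p) - 1/p * (-Real.log δ) ^ (1/p - 1) :=
    ex46_A_pos hp hδ hδ2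
  have hBpos : 0 < δ/p * (-Real.log δ) ^ (1/p - 1) :=
    mul_pos (div_pos hδ hp0) (Real.rpow_pos_of_pos hL0 _)
  have ht0 : 0 < δ ^ p := Real.rpow_pos_of_pos hδ p
  have ht1 : δ ^ p ≤ Real.exp (-1) := by
    have h1 : δ ^ p ≤ δ ^ (1:ℝ) :=
      Real.rpow_le_rpow_of_exponent_ge hδ hδ1.le (by linarith)
    rw [Real.rpow_one] at h1
    have h2 : Real.exp (-2) ≤ Real.exp (-1) := Real.exp_le_exp.mpr (by norm_num)
    linarith
  have ht1' : δ ^ p < 1 := Real.rpow_lt_one hδ.le hδ1 hp0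
  have hJ := ex46_hJ hp hδ hδ2
  have hKj := ex46_hKj hp hδ hδ2
  have hslope : slope = (-Real.log δ) ^ (1/p) - 1/p * (-Real.log δ) ^ (1/p - 1) :=
    ex46_slope hp hδ hδ1
  have habs : |Real.log δ| = -Real.log δ := abs_of_neg (Real.log_neg hδ hδ1)
  have hABδ : ((-Real.log δ) ^ (1/p) - 1/p * (-Real.log δ) ^ (1/p - 1)) * δ
      + δ/p * (-Real.log δ) ^ (1/p - 1) = δ * (-Real.log δ) ^ (1/p) := by
    field_simp
    ring
  have hδp : (δ ^ p) ^ (1/p) = δ := by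
    rw [← Real.rpow_mul hδ.le, mul_one_div_cancel hp0.ne', Real.rpow_one]
  have hh : ∀ x : ℝ, h x = if x ≤ 0 then 0
      else if x ≤ δ then x * |Real.log x| ^ (1/p)
      else slope * (x - δ) + δ * |Real.log δ| ^ (1/p) := fun _ => rfl
  have hκ : ∀ u : ℝ, κbar u = (h (u ^ (1/p))) ^ p := fun _ => rfl
  -- κbar agrees with the explicit piecewise function on [0, ∞)
  have hEq : ∀ u ∈ Ici (0:ℝ), κbar u
      = ex46K p ((-Real.log δ) ^ (1/p) - 1/p * (-Real.log δ) ^ (1/p - 1))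
          (δ/p * (-Real.log δ) ^ (1/p - 1)) (δ ^ p) u := by
    intro u hu
    rcases eq_or_lt_of_le (α := ℝ) hu with hu0 | hu0
    · -- u = 0
      rw [← hu0, hκ, Real.zero_rpow (by positivity : (1:ℝ)/p ≠ 0), hh]
      simp only [le_refl, if_pos]
      rw [Real.zero_rpow hp0.ne']
      simp [ex46K, ht0.le]
    · have hs0 : 0 < u ^ (1/p) := Real.rpow_pos_of_pos hu0 _
      by_cases hut : u ≤ δ ^ p
      · -- left piece
        have hsδ : u ^ (1/p) ≤ δ := by
          have h1 := Real.rpow_le_rpow hu0.le hut (by positivity : (0:ℝ) ≤ 1/p)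
          rwa [hδp] at h1
        have hu1 : u < 1 := lt_of_le_of_lt hut ht1'
        have hlogu : Real.log u < 0 := Real.log_neg hu0 hu1
        rw [hκ, hh]
        rw [if_neg (not_le.mpr hs0), if_pos hsδ]
        rw [Real.log_rpow hu0]
        have hneg : 1/p * Real.log u < 0 := mul_neg_of_pos_of_neg (by positivity) hlogu
        rw [abs_of_neg hneg]
        have hc0 : (0:ℝ) ≤ -(1/p * Real.log u) := by linarith
        rw [Real.mul_rpow hs0.le (Real.rpow_nonneg hc0 _)]
        rw [← Real.rpow_mul hu0.le, one_div_mul_cancel hp0.ne', Real.rpow_one]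
        rw [← Real.rpow_mul hc0, one_div_mul_cancel hp0.ne', Real.rpow_one]
        rw [ex46K]
        simp only [if_pos hut]
        ring
      · -- right piece
        push_neg at hut
        have hsδ : δ < u ^ (1/p) := by
          have h1 := Real.rpow_lt_rpow ht0.le hut (by positivity : (0:ℝ) < 1/p)
          rwa [hδp] at h1
        rw [hκ, hh]
        rw [if_neg (not_le.mpr hs0), if_neg (not_le.mpr hsδ), hslope, habs]
        rw [ex46K]
        simp only [if_neg (not_le.mpr hut)]
        congr 1
        linear_combination hABδ
  have hKconc := ex46_K_concave hp hApos hBpos ht0 hJ hKj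
  have hKmono := ex46_K_monotone hp hApos hBpos ht0 ht1 hJ hKj
  refine ⟨?_, ?_, ?_, ?_, ?_⟩
  · -- concavity
    refine ⟨convex_Ici 0, fun x hx y hy α β hα hβ hαβ => ?_⟩
    rw [hEq x hx, hEq y hy, hEq _ ((convex_Ici (0:ℝ)) hx hy hα hβ hαβ)]
    exact hKconc.2 hx hy hα hβ hαβ
  · -- monotone
    intro x hx y hy hxy
    rw [hEq x hx, hEq y hy]
    exact hKmono hx hy hxy
  · -- κbar 0 = 0
    rw [hEq 0 (by simp : (0:ℝ) ∈ Ici 0)]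
    simp [ex46K, ht0.le]
  · -- positivity
    intro u hu
    rw [hEq u hu.le]
    exact ex46_K_pos hp hApos hBpos ht1 u hu
  · -- divergence of the integral
    intro ε hε
    by_contra hne
    set c : ℝ := min (ε/2) (δ ^ p) with hcdef
    have hc0 : 0 < c := lt_min (by linarith) ht0
    have hcε : c < ε := lt_of_le_of_lt (min_le_left _ _) (by linarith)
    have hct : c ≤ δ ^ p := min_le_right _ _
    have hc1 : c ≤ Real.exp (-1) := le_trans hct ht1
    set I := ∫⁻ u in Set.Ioo 0 ε, ENNReal.ofReal (1 / κbar u) with hIdef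
    have hM : ∀ M : ℝ, ENNReal.ofReal M ≤ I := by
      intro M
      obtain ⟨a0, ha0, hac, hle⟩ := ex46_lintegral_piece hp hc0 hc1 M
      refine le_trans hle ?_
      have hsub : Ioc a0 c ⊆ Ioo 0 ε := fun x hx =>
        ⟨lt_trans ha0 hx.1, lt_of_le_of_lt hx.2 hcε⟩
      calc ∫⁻ x in Ioc a0 c, ENNReal.ofReal (p / (x * (-Real.log x)))
          = ∫⁻ x in Ioc a0 c, ENNReal.ofReal (1 / κbar x) := by
            apply setLIntegral_congr_fun measurableSet_Ioc
            intro x hx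
            have hx0 : 0 < x := lt_trans ha0 hx.1
            have hxt : x ≤ δ ^ p := le_trans hx.2 hct
            beta_reduce
            rw [hEq x hx0.le]
            rw [ex46K]
            simp only [if_pos hxt]
            rw [one_div_div]
        _ ≤ I := lintegral_mono_set hsub
    have h1 := hM (I.toReal + 1)
    have h2 : I < ENNReal.ofReal (I.toReal + 1) := by
      refine (ENNReal.lt_ofReal_iff_toReal_lt hne).mpr ?_
      linarith [ENNReal.toReal_nonneg (a := I)]
    exact absurd h1 (not_le.mpr h2)
end
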